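/- Suppose β_n = 1 − (2 + (−1)^n)/ℓ_n (for n large enough that this lies in [0,1]). Then for every real c: along even n, lim d_n(t_n + c·w_n) = e^{−c}·(1 + e^{3}), while along odd n, lim d_n(t_n + c·w_n) = e^{−c}·(1 + e^{1}). In particular, for no real c does the sequence d_n(t_n + c·w_n) converge: there is no profile cutoff at (t_n, w_n). -/

import Mathlib

open Filter Real
open scoped Topology

/-- `ℓ_n = log(n / log n)`. -/
noncomputable def ell (n : ℕ) : ℝ := Real.log (n / Real.log n)

/-- Distance to equilibrium of the Ornstein–Uhlenbeck example of Barrera–Ycart: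
`d_n(t) = Σ_{i=1}^{9^n} a_{i,n} e^{-ρ_{i,n} t}` with `a_{1,n} = e^n`,
`ρ_{1,n} = n/(1 + (β_n/n) ℓ_n)`, and for `2 ≤ i ≤ 9^n`:
`a_{i,n} = e^{-n}`, `ρ_{i,n} = log(e^n + (i-1) e^{-n})`. -/
noncomputable def dCut (β : ℕ → ℝ) (n : ℕ) (t : ℝ) : ℝ :=
  Real.exp n * Real.exp (-((n : ℝ) / (1 + β n / n * ell n)) * t) +
    ∑ i ∈ Finset.Icc (2 : ℕ) (9 ^ n),
      Real.exp (-(n : ℝ)) *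
        Real.exp (-Real.log (Real.exp n + ((i : ℝ) - 1) * Real.exp (-(n : ℝ))) * t)

/-- Cutoff location `t_n = 1 + β_n ℓ_n / n`. -/
noncomputable def cutT (β : ℕ → ℝ) (n : ℕ) : ℝ := 1 + β n * ell n / n

/-- Window width `w_n = t_n / n`. -/
noncomputable def cutW (β : ℕ → ℝ) (n : ℕ) : ℝ := cutT β n / n

/-- Correction term `r_n = ℓ_n w_n`. -/
noncomputable def cutR (β : ℕ → ℝ) (n : ℕ) : ℝ := ell n * cutW β n

/-!
At `T = t_n + c w_n = t_n (1 + c/n)` the first term of `d_n` is exactly `e^{-c}`. The other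
`9^n - 1` terms are a Riemann sum of the decreasing function `y ↦ e^{-n} (e^{-n} y + e^n)^{-T}`,
so up to `e^{-n}` they equal `(e^{n(1-T)} - B^{1-T})/(T-1)` with `B = e^n + (9^n - 1) e^{-n}`.
Write `n (T - 1) = ℓ_n + κ_n`. Since `e^{-ℓ_n} = log n / n`, the first part is
`(log n / (ℓ_n + κ_n)) e^{-κ_n} → e^{-κ}`, and the second is smaller by the factor
`(B e^{-n})^{1-T} ≤ (9 e^{-2})^{-n(T-1)} → 0`. When `ℓ_n - β_n ℓ_n → s` one gets `κ = c - s`;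
the prescribed `β_n` has `s = 2 + (-1)^n`, which is `3` along even and `1` along odd `n`.
-/

open Finset

theorem AntitoneOn.integral_sub_le_sum_succ {f : ℝ → ℝ} {M : ℕ}
    (hf : AntitoneOn f (Set.Icc 0 M)) (hM : 0 ≤ f M) :
    (∫ x in (0 : ℝ)..M, f x) - f 0 ≤ ∑ i ∈ range M, f (i + 1) := by
  have hle : ∫ x in (0 : ℝ)..0 + M, f x ≤ ∑ i ∈ range M, f (0 + i) :=
    AntitoneOn.integral_le_sum (by rwa [zero_add])
  have hsplit : ∑ i ∈ range M, f i + f M = f 0 + ∑ i ∈ range M, f (i + 1) := by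
    rw [← sum_range_succ (fun i : ℕ => f i), sum_range_succ']
    push_cast
    ring
  simp only [zero_add] at hle
  linarith

theorem integral_mul_rpow_neg {a b T : ℝ} (ha : 0 ≤ a) (hb : 0 < b) (hT : T ≠ 1) {M : ℝ}
    (hM : 0 ≤ M) :
    ∫ y in (0 : ℝ)..M, a * (a * y + b) ^ (-T) =
      (b ^ (1 - T) - (a * M + b) ^ (1 - T)) / (T - 1) := by
  have hsub := intervalIntegral.smul_integral_comp_mul_add (a := 0) (b := M)
    (fun x : ℝ => x ^ (-T)) a b
  have hpos : 0 < a * M + b := by positivity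
  simp only [smul_eq_mul, mul_zero, zero_add] at hsub
  rw [intervalIntegral.integral_const_mul, hsub,
    integral_rpow (Or.inr ⟨by contrapose! hT; linarith, Set.notMem_uIcc_of_lt hb hpos⟩),
    show -T + 1 = 1 - T by ring]
  field_simp
  ring

theorem sum_mul_rpow_neg_mem_Icc {a b T : ℝ} (ha : 0 < a) (hb : 0 < b) (hT : 1 < T) (M : ℕ) :
    ∑ j ∈ range M, a * (a * (j + 1) + b) ^ (-T) ∈
      Set.Icc ((b ^ (1 - T) - (a * M + b) ^ (1 - T)) / (T - 1) - a * b ^ (-T))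
        ((b ^ (1 - T) - (a * M + b) ^ (1 - T)) / (T - 1)) := by
  set f : ℝ → ℝ := fun y => a * (a * y + b) ^ (-T)
  have hbase : ∀ y ∈ Set.Ici (0 : ℝ), 0 < a * y + b := fun y hy => by
    have : (0 : ℝ) ≤ y := hy; positivity
  have hanti : AntitoneOn f (Set.Ici 0) := fun x hx y _ hxy =>
    mul_le_mul_of_nonneg_left (rpow_le_rpow_of_nonpos (hbase x hx) (by gcongr) (by linarith))
      ha.le
  rw [← integral_mul_rpow_neg ha.le hb hT.ne' M.cast_nonneg]
  constructor
  · have h := (hanti.mono Set.Icc_subset_Ici_self).integral_sub_le_sum_succ (M := M)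
      (by have := hbase M (Set.mem_Ici.2 M.cast_nonneg); positivity)
    simpa only [f, mul_zero, zero_add] using h
  · have h := (hanti.mono Set.Icc_subset_Ici_self).sum_le_integral (x₀ := 0) (a := M)
    simpa only [f, zero_add, Nat.cast_add, Nat.cast_one] using h

theorem ell_eq_log_sub_log_log {n : ℕ} (hn : 2 ≤ n) : ell n = log n - log (log n) := by
  have hlog : 0 < log n := log_pos (by exact_mod_cast hn)
  rw [ell, log_div (by positivity) hlog.ne']

theorem tendsto_log_natCast_atTop : Tendsto (fun n : ℕ => log n) atTop atTop :=
  tendsto_log_atTop.comp tendsto_natCast_atTop_atTop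

theorem tendsto_ell_div_log : Tendsto (fun n : ℕ => ell n / log n) atTop (𝓝 1) := by
  have hloglog : Tendsto (fun n : ℕ => log (log n) / log n) atTop (𝓝 0) :=
    isLittleO_log_id_atTop.tendsto_div_nhds_zero.comp tendsto_log_natCast_atTop
  refine (by simpa using tendsto_const_nhds.sub hloglog :
    Tendsto (fun n : ℕ => 1 - log (log n) / log n) atTop (𝓝 1)).congr' ?_
  filter_upwards [eventually_ge_atTop 2] with n hn
  have hlog : 0 < log n := log_pos (by exact_mod_cast hn)
  rw [ell_eq_log_sub_log_log hn]
  field_simp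

theorem tendsto_ell_atTop : Tendsto ell atTop atTop :=
  (tendsto_ell_div_log.pos_mul_atTop one_pos tendsto_log_natCast_atTop).congr' <| by
    filter_upwards [eventually_ge_atTop 2] with n hn
    have hlog : 0 < log n := log_pos (by exact_mod_cast hn)
    field_simp

theorem tendsto_ell_div_natCast : Tendsto (fun n : ℕ => ell n / n) atTop (𝓝 0) := by
  have hlog : Tendsto (fun n : ℕ => log n / n) atTop (𝓝 0) :=
    isLittleO_log_id_atTop.tendsto_div_nhds_zero.comp tendsto_natCast_atTop_atTop
  refine (by simpa using tendsto_ell_div_log.mul hlog :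
    Tendsto (fun n : ℕ => ell n / log n * (log n / n)) atTop (𝓝 0)).congr' ?_
  filter_upwards [eventually_ge_atTop 2] with n hn
  have hlog : 0 < log n := log_pos (by exact_mod_cast hn)
  field_simp

section asymptotics

variable {l : Filter ℕ} {q : ℕ → ℝ} {κ : ℝ}

theorem tendsto_div_log_of_tendsto_sub_ell (hl : l ≤ atTop)
    (hq : Tendsto (fun n => q n - ell n) l (𝓝 κ)) :
    Tendsto (fun n => q n / log n) l (𝓝 1) := by
  have hlog := (tendsto_log_natCast_atTop.mono_left hl).inv_tendsto_atTop
  have h := (tendsto_ell_div_log.mono_left hl).add (hq.mul hlog)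
  rw [mul_zero, add_zero] at h
  exact h.congr fun n => by simp only [Pi.inv_apply]; ring

theorem tendsto_atTop_of_tendsto_sub_ell (hl : l ≤ atTop)
    (hq : Tendsto (fun n => q n - ell n) l (𝓝 κ)) : Tendsto q l atTop :=
  ((tendsto_ell_atTop.mono_left hl).atTop_add hq).congr fun n => by ring

theorem tendsto_natCast_mul_exp_neg_div (hl : l ≤ atTop)
    (hq : Tendsto (fun n => q n - ell n) l (𝓝 κ)) :
    Tendsto (fun n : ℕ => n * exp (-q n) / q n) l (𝓝 (exp (-κ))) := by
  have hlog_div : Tendsto (fun n : ℕ => log n / q n) l (𝓝 1) := by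
    simpa using (tendsto_div_log_of_tendsto_sub_ell hl hq).inv₀ one_ne_zero
  have h := hlog_div.mul ((continuous_exp.tendsto _).comp hq.neg)
  rw [one_mul] at h
  refine h.congr' ?_
  filter_upwards [hl (eventually_ge_atTop 2)] with n hn
  have hlog : 0 < log n := log_pos (by exact_mod_cast hn)
  have hexp_ell : exp (ell n) = n / log n := exp_log (by positivity)
  simp only [Function.comp_apply, neg_sub, exp_sub, hexp_ell]
  rw [exp_neg]
  field_simp

theorem tendsto_rpow_neg_div_natCast (hl : l ≤ atTop) {r : ℝ} (hr : 1 < r) {x : ℕ → ℝ}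
    (hx : ∀ n, r ^ n ≤ x n) (hq : Tendsto q l atTop) :
    Tendsto (fun n => x n ^ (-(q n / n))) l (𝓝 0) := by
  have hr_pow : ∀ n : ℕ, 0 < r ^ n := fun n => pow_pos (by linarith) n
  refine tendsto_of_tendsto_of_tendsto_of_le_of_le' tendsto_const_nhds
    ((tendsto_rpow_atBot_of_base_gt_one r hr).comp (tendsto_neg_atTop_atBot.comp hq))
    (Eventually.of_forall fun n => rpow_nonneg ((hr_pow n).le.trans (hx n)) _) ?_
  filter_upwards [hl (eventually_ge_atTop 1), hq.eventually_ge_atTop 0] with n hn hq0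
  calc x n ^ (-(q n / n)) ≤ (r ^ n) ^ (-(q n / n)) :=
        rpow_le_rpow_of_nonpos (hr_pow n) (hx n) (neg_nonpos.2 (by positivity))
    _ = r ^ (-q n) := by
        rw [← rpow_natCast_mul (by linarith)]
        congr 1
        field_simp

end asymptotics

/-- The terms `2 ≤ i ≤ 9^n` of `d_n(T)`, indexed by `j = i - 2`. -/
noncomputable def tailSum (n : ℕ) (T : ℝ) : ℝ :=
  ∑ j ∈ range (9 ^ n - 1), exp (-n) * (exp (-n) * (j + 1) + exp n) ^ (-T)

theorem one_lt_nine_mul_exp_neg_two : 1 < 9 * exp (-2) := by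
  have h : exp 2 < 9 := by
    have := exp_one_lt_d9
    rw [show (2 : ℝ) = 1 + 1 by norm_num, exp_add]
    nlinarith [exp_pos 1]
  rw [exp_neg, ← div_eq_mul_inv, one_lt_div (exp_pos 2)]
  exact h

theorem nine_mul_exp_neg_two_pow_le (n : ℕ) :
    (9 * exp (-2)) ^ n ≤ 1 + exp (-(2 * n)) * ((9 ^ n - 1 : ℕ) : ℝ) := by
  have h9 : 1 ≤ 9 ^ n := Nat.one_le_pow _ _ (by norm_num)
  have hexp : exp (-(2 * n)) ≤ 1 := exp_le_one_iff.2 (by linarith [n.cast_nonneg (α := ℝ)])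
  rw [Nat.cast_sub h9, mul_pow, ← exp_nat_mul, show (n : ℝ) * -2 = -(2 * n) by ring]
  push_cast
  nlinarith

theorem exp_neg_mul_exp_rpow {x : ℝ} (hx : x ≠ 0) (q : ℝ) :
    exp (-x) * exp x ^ (-(1 + q / x)) = exp (-(2 * x + q)) := by
  rw [← exp_mul, ← exp_add]
  congr 1
  field_simp
  ring

theorem exp_rpow_sub_rpow_div_eq {x : ℝ} (hx : x ≠ 0) (q : ℝ) {M : ℝ} (hM : 0 ≤ M) :
    (exp x ^ (1 - (1 + q / x)) - (exp (-x) * M + exp x) ^ (1 - (1 + q / x))) / (1 + q / x - 1) =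
      x * exp (-q) / q * (1 - (1 + exp (-(2 * x)) * M) ^ (-(q / x))) := by
  have hsplit : exp (-x) * M + exp x = exp x * (1 + exp (-(2 * x)) * M) := by
    rw [mul_add, mul_one, ← mul_assoc, ← exp_add]
    ring_nf
  have hexp : exp x ^ (-(q / x)) = exp (-q) := by
    rw [← exp_mul]
    field_simp
  simp only [hsplit, sub_add_cancel_left, add_sub_cancel_left,
    mul_rpow (exp_pos _).le (by positivity : (0 : ℝ) ≤ 1 + exp (-(2 * x)) * M), hexp]
  field_simp

theorem tendsto_tailSum {l : Filter ℕ} {q : ℕ → ℝ} {κ : ℝ} (hl : l ≤ atTop)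
    (hq : Tendsto (fun n => q n - ell n) l (𝓝 κ)) :
    Tendsto (fun n => tailSum n (1 + q n / n)) l (𝓝 (exp (-κ))) := by
  set M : ℕ → ℝ := fun n => ((9 ^ n - 1 : ℕ) : ℝ)
  set I : ℕ → ℝ := fun n => (exp n ^ (1 - (1 + q n / n)) -
    (exp (-n) * M n + exp n) ^ (1 - (1 + q n / n))) / (1 + q n / n - 1)
  have hq_top := tendsto_atTop_of_tendsto_sub_ell hl hq
  have hn_pos : ∀ᶠ n : ℕ in l, (0 : ℝ) < n := by
    filter_upwards [hl (eventually_gt_atTop 0)] with n hn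
    exact_mod_cast hn
  have hI : Tendsto I l (𝓝 (exp (-κ))) := by
    have hratio := tendsto_rpow_neg_div_natCast hl one_lt_nine_mul_exp_neg_two
      nine_mul_exp_neg_two_pow_le hq_top
    have h := (tendsto_natCast_mul_exp_neg_div hl hq).mul
      ((tendsto_const_nhds (x := (1 : ℝ))).sub hratio)
    rw [sub_zero, mul_one] at h
    refine h.congr' ?_
    filter_upwards [hn_pos] with n hn
    exact (exp_rpow_sub_rpow_div_eq hn.ne' _ (Nat.cast_nonneg _)).symm
  have hcorr : Tendsto (fun n : ℕ => exp (-n) * exp n ^ (-(1 + q n / n))) l (𝓝 0) := by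
    have h : Tendsto (fun n : ℕ => 2 * n + q n) l atTop :=
      ((tendsto_natCast_atTop_atTop.mono_left hl).const_mul_atTop two_pos).atTop_add_atTop hq_top
    refine (tendsto_exp_atBot.comp (tendsto_neg_atTop_atBot.comp h)).congr' ?_
    filter_upwards [hn_pos] with n hn
    exact (exp_neg_mul_exp_rpow hn.ne' _).symm
  have hbracket : ∀ᶠ n in l, tailSum n (1 + q n / n) ∈
      Set.Icc (I n - exp (-n) * exp n ^ (-(1 + q n / n))) (I n) := by
    filter_upwards [hq_top.eventually_gt_atTop 0, hn_pos] with n hq0 hn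
    exact sum_mul_rpow_neg_mem_Icc (exp_pos _) (exp_pos _)
      (lt_add_of_pos_right 1 (by positivity)) _
  have h := hI.sub hcorr
  rw [sub_zero] at h
  exact tendsto_of_tendsto_of_tendsto_of_le_of_le' h hI
    (hbracket.mono fun n hn => hn.1) (hbracket.mono fun n hn => hn.2)

theorem dCut_window_eq (β : ℕ → ℝ) (c : ℝ) {n : ℕ} (hn : n ≠ 0) (ht : cutT β n ≠ 0) :
    dCut β n (cutT β n + c * cutW β n) =
      exp (-c) + tailSum n (1 + (β n * ell n + c * cutT β n) / n) := by
  have hrate : 1 + β n / n * ell n = cutT β n := by rw [cutT]; ring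
  have hT : cutT β n + c * cutW β n = 1 + (β n * ell n + c * cutT β n) / n := by
    rw [cutW, cutT]; ring
  rw [dCut, tailSum, hrate, ← exp_add, hT]
  congr 1
  · congr 1
    rw [← hT, cutW]
    field_simp
    ring
  · rw [← Ico_add_one_right_eq_Icc, sum_Ico_eq_sum_range,
      show 9 ^ n + 1 - 2 = 9 ^ n - 1 by omega]
    refine sum_congr rfl fun j _ => ?_
    have hx : 0 < exp (-n) * (j + 1) + exp n := by positivity
    rw [rpow_def_of_pos hx]
    push_cast
    ring_nf

theorem tendsto_dCut_window {β : ℕ → ℝ} (c : ℝ) {s : ℝ} {l : Filter ℕ} (hl : l ≤ atTop)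
    (hβ : Tendsto (fun n => ell n - β n * ell n) l (𝓝 s)) :
    Tendsto (fun n => dCut β n (cutT β n + c * cutW β n)) l (𝓝 (exp (-c) * (1 + exp s))) := by
  have hinv : Tendsto (fun n : ℕ => (n : ℝ)⁻¹) l (𝓝 0) :=
    (tendsto_inv_atTop_zero.comp tendsto_natCast_atTop_atTop).mono_left hl
  have hT : Tendsto (cutT β) l (𝓝 1) := by
    have h := (tendsto_const_nhds (x := (1 : ℝ))).add
      ((tendsto_ell_div_natCast.mono_left hl).sub (hβ.mul hinv))
    rw [mul_zero, sub_zero, add_zero] at h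
    exact h.congr fun n => by rw [cutT]; ring
  have hq : Tendsto (fun n => β n * ell n + c * cutT β n - ell n) l (𝓝 (c - s)) := by
    have h := (tendsto_const_nhds (x := c)).mul hT |>.sub hβ
    rw [mul_one] at h
    exact h.congr fun n => by ring
  have hlim := (tendsto_const_nhds (x := exp (-c))).add (tendsto_tailSum hl hq)
  rw [show exp (-c) + exp (-(c - s)) = exp (-c) * (1 + exp s) by
    rw [mul_add, mul_one, ← exp_add]; ring_nf] at hlim
  refine hlim.congr' ?_
  filter_upwards [hl (eventually_ne_atTop 0), hT.eventually_ne one_ne_zero] with n hn ht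
  exact (dCut_window_eq β c hn ht).symm

theorem tendsto_dCut_window_comp {β : ℕ → ℝ} (c : ℝ) {s : ℝ} {φ : ℕ → ℕ}
    (hφ : Tendsto φ atTop atTop) (hβ : ∀ᶠ k in atTop, ell (φ k) - β (φ k) * ell (φ k) = s) :
    Tendsto (fun k => dCut β (φ k) (cutT β (φ k) + c * cutW β (φ k))) atTop
      (𝓝 (exp (-c) * (1 + exp s))) :=
  tendsto_map'_iff.1 <| tendsto_dCut_window c hφ <|
    tendsto_map'_iff.2 <| tendsto_const_nhds.congr' <| hβ.mono fun _ hk => hk.symm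

/-- Case `β_n = 1 - (2 + (-1)^n)/ℓ_n` of Barrera–Ycart: along even `n`,
`d_n(t_n + c w_n) → e^{-c}(1 + e^3)`, while along odd `n`,
`d_n(t_n + c w_n) → e^{-c}(1 + e)`; hence for no real `c` does
`d_n(t_n + c w_n)` converge: there is no profile cutoff at `(t_n, w_n)`. -/
theorem no_profile_beta
    (β : ℕ → ℝ) (hβ : ∀ n, β n = 1 - (2 + (-1 : ℝ) ^ n) / ell n) :
    (∀ c : ℝ, Tendsto (fun k : ℕ => dCut β (2 * k) (cutT β (2 * k) + c * cutW β (2 * k)))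
        atTop (𝓝 (Real.exp (-c) * (1 + Real.exp 3)))) ∧
    (∀ c : ℝ, Tendsto
        (fun k : ℕ => dCut β (2 * k + 1) (cutT β (2 * k + 1) + c * cutW β (2 * k + 1)))
        atTop (𝓝 (Real.exp (-c) * (1 + Real.exp 1)))) ∧
    (∀ c : ℝ, ¬ ∃ L : ℝ, Tendsto (fun n => dCut β n (cutT β n + c * cutW β n))
        atTop (𝓝 L)) := by
  have hgap : ∀ᶠ n in atTop, ell n - β n * ell n = 2 + (-1 : ℝ) ^ n := by
    filter_upwards [tendsto_ell_atTop.eventually_gt_atTop 0] with n hn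
    rw [hβ n]
    field_simp
    ring
  have h_even : Tendsto (fun k : ℕ => 2 * k) atTop atTop :=
    tendsto_id.const_mul_atTop' two_pos
  have h_odd : Tendsto (fun k : ℕ => 2 * k + 1) atTop atTop :=
    tendsto_atTop_mono (fun k => Nat.le_succ (2 * k)) h_even
  have lim_even (c : ℝ) := tendsto_dCut_window_comp (s := 3) c h_even <|
    (h_even.eventually hgap).mono fun k hk => by rw [hk, pow_mul]; norm_num
  have lim_odd (c : ℝ) := tendsto_dCut_window_comp (s := 1) c h_odd <|
    (h_odd.eventually hgap).mono fun k hk => by rw [hk, pow_succ, pow_mul]; norm_num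
  refine ⟨lim_even, lim_odd, fun c ⟨L, hL⟩ => ?_⟩
  have h := (tendsto_nhds_unique (hL.comp h_even) (lim_even c)).symm.trans
    (tendsto_nhds_unique (hL.comp h_odd) (lim_odd c))
  have := exp_injective (add_left_cancel (mul_left_cancel₀ (exp_pos _).ne' h))
  norm_num at this
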